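/- arXiv:1801.03789 — 3 statements merged into one kernel-verified Lean document; each statement's English description precedes it below -/
import Mathlib

section
/- Let x : ℝ → ℝⁿ solve x'(t) = A(t)x(t) with A(t) Metzler and x(0) ≥ 0, and let ζ : [0,T] → ℝⁿ be differentiable with ζ(0) > 0 (componentwise) and ζ'(τ)ᵀ + ζ(τ)ᵀA(τ) ≤ 0 componentwise. Then the function V(τ) := ζ(τ)ᵀ x(τ) is nonincreasing on [0,T]. -/
/-!
Along the flow, `V' = (ζ' + ζᵀA) ⬝ x`, which is `≤ 0` as soon as `x ≥ 0`. For the nonnegativity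
of `x`, pick `K` above every row sum of `A` on the interval and perturb to `x + ε e^{Kt}`. Where this
perturbed curve lies in the nonnegative orthant with a vanishing coordinate `i`, the Metzler
property makes `(A (x + ε e^{Kt}))ᵢ ≥ 0`, so the `i`-th derivative is at least
`(K - ∑ⱼ Aᵢⱼ) ε e^{Kt} > 0`; by continuous induction the curve never leaves the orthant, and
`ε → 0` gives `x ≥ 0`.
-/

open Set Filter Topology Matrix

lemma HasDerivWithinAt.eventually_pos_of_eq_zero {f : ℝ → ℝ} {d t : ℝ}
    (hf : HasDerivWithinAt f d (Ioi t) t) (hd : 0 < d) (ht : f t = 0) :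
    ∀ᶠ s in 𝓝[>] t, 0 < f s := by
  have hslope := (hasDerivWithinAt_iff_tendsto_slope' (lt_irrefl t)).1 hf
  filter_upwards [hslope.eventually (lt_mem_nhds hd), self_mem_nhdsWithin] with s hs hts
  rw [slope_def_field, ht, sub_zero] at hs
  exact (div_pos_iff_of_pos_right (sub_pos.2 hts)).1 hs

theorem nonneg_of_deriv_right_pos_boundary {ι : Type*} [Finite ι] {a b : ℝ} {w : ℝ → ι → ℝ}
    (hw : ContinuousOn w (Icc a b)) (ha : 0 ≤ w a)
    (hbound : ∀ t ∈ Ico a b, 0 ≤ w t → ∀ i, w t i = 0 →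
      ∃ d, 0 < d ∧ HasDerivWithinAt (fun s => w s i) d (Ioi t) t) :
    ∀ t ∈ Icc a b, 0 ≤ w t := by
  have hclosed : IsClosed ({t | 0 ≤ w t} ∩ Icc a b) := by
    rw [inter_comm]
    exact hw.preimage_isClosed_of_isClosed isClosed_Icc isClosed_Ici
  refine hclosed.Icc_subset_of_forall_mem_nhdsWithin ha fun t ⟨ht, htab⟩ => ?_
  refine eventually_all.2 fun i => ?_
  rcases (ht i).eq_or_lt with hzero | hpos
  · obtain ⟨d, hd, hderiv⟩ := hbound t htab ht i hzero.symm
    exact (hderiv.eventually_pos_of_eq_zero hd hzero.symm).mono fun _ => le_of_lt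
  · have hcont : ContinuousWithinAt (fun s => w s i) (Icc a b) t :=
      ((continuous_apply i).comp_continuousOn hw) t (Ico_subset_Icc_self htab)
    exact nhdsWithin_le_of_mem (Icc_mem_nhdsGT_of_mem htab)
      ((hcont.eventually (lt_mem_nhds hpos)).mono fun _ => le_of_lt)

lemma exists_forall_sum_lt_of_continuousOn {X ι : Type*} [TopologicalSpace X] [Fintype ι]
    {s : Set X} (hs : IsCompact s) {A : X → Matrix ι ι ℝ}
    (hA : ∀ i j, ContinuousOn (fun t => A t i j) s) :
    ∃ K, ∀ t ∈ s, ∀ i, ∑ j, A t i j < K := by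
  obtain ⟨C, hC⟩ := hs.exists_bound_of_continuousOn (f := fun t i => ∑ j, A t i j)
    (continuousOn_pi.2 fun i => continuousOn_finsetSum _ fun j _ => hA i j)
  refine ⟨C + 1, fun t ht i => ?_⟩
  have := (norm_le_pi_norm (fun i => ∑ j, A t i j) i).trans (hC t ht)
  linarith [le_abs_self (∑ j, A t i j), Real.norm_eq_abs (∑ j, A t i j)]

lemma Matrix.mulVec_apply_nonneg_of_offDiag_nonneg {ι R : Type*} [Fintype ι] [Semiring R]
    [PartialOrder R] [IsOrderedRing R] {M : Matrix ι ι R} (hM : ∀ i j, i ≠ j → 0 ≤ M i j)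
    {v : ι → R} (hv : 0 ≤ v) {i : ι} (hvi : v i = 0) : 0 ≤ (M *ᵥ v) i := by
  refine Finset.sum_nonneg fun j _ => ?_
  rcases eq_or_ne i j with rfl | hij
  · simp [hvi]
  · exact mul_nonneg (hM i j hij) (hv j)

theorem nonneg_of_hasDerivAt_mulVec_of_offDiag_nonneg {ι : Type*} [Fintype ι] {a b : ℝ}
    {A : ℝ → Matrix ι ι ℝ} (hAcont : ∀ i j, ContinuousOn (fun t => A t i j) (Icc a b))
    (hA : ∀ t ∈ Icc a b, ∀ i j, i ≠ j → 0 ≤ A t i j) {x : ℝ → ι → ℝ}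
    (hx : ∀ t ∈ Icc a b, ∀ i, HasDerivAt (fun s => x s i) ((A t *ᵥ x t) i) t) (ha : 0 ≤ x a) :
    ∀ t ∈ Icc a b, 0 ≤ x t := by
  obtain ⟨K, hK⟩ := exists_forall_sum_lt_of_continuousOn isCompact_Icc hAcont
  have hperturbed : ∀ ε > 0, ∀ t ∈ Icc a b, 0 ≤ x t + fun _ => ε * Real.exp (K * t) := by
    intro ε hε
    have hexp : ∀ t, HasDerivAt (fun s => ε * Real.exp (K * s)) (ε * Real.exp (K * t) * K) t :=
      fun t => by simpa [mul_assoc] using ((hasDerivAt_id t).const_mul K).exp.const_mul ε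
    refine nonneg_of_deriv_right_pos_boundary ?_ ?_ fun t ht hw i hwi => ?_
    · exact continuousOn_pi.2 fun i t ht =>
        ((hx t ht i).add (hexp t)).continuousAt.continuousWithinAt
    · exact add_nonneg ha fun _ => by positivity
    · have ht' := Ico_subset_Icc_self ht
      set c := ε * Real.exp (K * t)
      have hsplit : (A t *ᵥ x t) i = (A t *ᵥ (x t + fun _ => c)) i - (∑ j, A t i j) * c := by
        simp only [mulVec, dotProduct, Pi.add_apply, mul_add, Finset.sum_add_distrib,
          Finset.sum_mul, add_sub_cancel_right]
      have hinward := (A t).mulVec_apply_nonneg_of_offDiag_nonneg (hA t ht') hw hwi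
      have hc : 0 < c := by positivity
      refine ⟨_, ?_, ((hx t ht' i).add (hexp t)).hasDerivWithinAt⟩
      rw [hsplit]
      nlinarith [hK t ht' i]
  intro t ht i
  refine le_of_forall_pos_le_add fun ε hε => ?_
  have := hperturbed (ε / Real.exp (K * t)) (by positivity) t ht i
  rw [Pi.add_apply, div_mul_cancel₀ _ (Real.exp_pos _).ne'] at this
  linarith

lemma hasDerivAt_dotProduct {ι : Type*} [Fintype ι] {f g : ℝ → ι → ℝ} {f' g' : ι → ℝ} {t : ℝ}
    (hf : ∀ i, HasDerivAt (fun s => f s i) (f' i) t)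
    (hg : ∀ i, HasDerivAt (fun s => g s i) (g' i) t) :
    HasDerivAt (fun s => f s ⬝ᵥ g s) (f' ⬝ᵥ g t + f t ⬝ᵥ g') t := by
  have h : HasDerivAt (fun s => ∑ i, f s i * g s i) (∑ i, (f' i * g t i + f t i * g' i)) t :=
    HasDerivAt.fun_sum fun i _ => (hf i).mul (hg i)
  rwa [Finset.sum_add_distrib] at h

theorem stmt7_general {n : ℕ} (T : ℝ)
    (A : ℝ → Matrix (Fin n) (Fin n) ℝ)
    (hAcont : ∀ i j, Continuous fun τ => A τ i j)
    (hMetzler : ∀ τ, ∀ i j, i ≠ j → 0 ≤ A τ i j)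
    (x : ℝ → Fin n → ℝ)
    (hxode : ∀ t ∈ Set.Icc (0 : ℝ) T, ∀ i,
      HasDerivAt (fun s => x s i) ((A t).mulVec (x t) i) t)
    (hx0 : ∀ i, 0 ≤ x 0 i)
    (ζ ζ' : ℝ → Fin n → ℝ)
    (hζ : ∀ τ ∈ Set.Icc (0 : ℝ) T, ∀ j, HasDerivAt (fun t => ζ t j) (ζ' τ j) τ)
    (hineq : ∀ τ ∈ Set.Icc (0 : ℝ) T, ∀ j, ζ' τ j + Matrix.vecMul (ζ τ) (A τ) j ≤ 0) :
    AntitoneOn (fun τ => dotProduct (ζ τ) (x τ)) (Set.Icc (0 : ℝ) T) := by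
  have hx_nonneg := nonneg_of_hasDerivAt_mulVec_of_offDiag_nonneg
    (fun i j => (hAcont i j).continuousOn) (fun t _ => hMetzler t) hxode hx0
  have hV : ∀ τ ∈ Icc 0 T,
      HasDerivAt (fun τ => ζ τ ⬝ᵥ x τ) ((ζ' τ + ζ τ ᵥ* A τ) ⬝ᵥ x τ) τ := fun τ hτ => by
    rw [add_dotProduct, ← dotProduct_mulVec]
    exact hasDerivAt_dotProduct (hζ τ hτ) (hxode τ hτ)
  have hV_nonpos : ∀ τ ∈ Icc 0 T, (ζ' τ + ζ τ ᵥ* A τ) ⬝ᵥ x τ ≤ 0 := fun τ hτ => by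
    have := dotProduct_nonneg_of_nonneg (neg_nonneg.2 (hineq τ hτ)) (hx_nonneg τ hτ)
    rwa [neg_dotProduct, neg_nonneg] at this
  refine antitoneOn_of_hasDerivWithinAt_nonpos (f' := fun τ => (ζ' τ + ζ τ ᵥ* A τ) ⬝ᵥ x τ)
    (convex_Icc 0 T) (fun τ hτ => (hV τ hτ).continuousAt.continuousWithinAt) (fun τ hτ => ?_) fun τ hτ => ?_
  all_goals rw [interior_Icc] at hτ
  · exact (hV τ (Ioo_subset_Icc_self hτ)).hasDerivWithinAt
  · exact hV_nonpos τ (Ioo_subset_Icc_self hτ)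

/-- If x solves x'(t) = A(t)x(t) with A(t) Metzler and x(0) ≥ 0, and ζ is
differentiable with ζ(0) > 0 componentwise and ζ'(τ)ᵀ + ζ(τ)ᵀA(τ) ≤ 0 componentwise,
then V(τ) := ζ(τ)ᵀx(τ) is nonincreasing on [0,T]. -/
theorem stmt7 {n : ℕ} (T : ℝ)
    (A : ℝ → Matrix (Fin n) (Fin n) ℝ)
    (hAcont : ∀ i j, Continuous fun τ => A τ i j)
    (hMetzler : ∀ τ, ∀ i j, i ≠ j → 0 ≤ A τ i j)
    (x : ℝ → Fin n → ℝ)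
    (hxode : ∀ t ∈ Set.Icc (0 : ℝ) T, ∀ i,
      HasDerivAt (fun s => x s i) ((A t).mulVec (x t) i) t)
    (hx0 : ∀ i, 0 ≤ x 0 i)
    (ζ ζ' : ℝ → Fin n → ℝ)
    (hζ : ∀ τ ∈ Set.Icc (0 : ℝ) T, ∀ j, HasDerivAt (fun t => ζ t j) (ζ' τ j) τ)
    (hζ0 : ∀ j, 0 < ζ 0 j)
    (hineq : ∀ τ ∈ Set.Icc (0 : ℝ) T, ∀ j, ζ' τ j + Matrix.vecMul (ζ τ) (A τ) j ≤ 0) :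
    AntitoneOn (fun τ => dotProduct (ζ τ) (x τ)) (Set.Icc (0 : ℝ) T) :=
  stmt7_general T A hAcont hMetzler x hxode hx0 ζ ζ' hζ hineq
end

section
/- (Range dwell-time equivalence, direction (a)⇒(b)) Suppose A(τ) is Metzler for τ ∈ [0,Tmax], J ≥ 0, and there exists λ > 0 with λᵀ(J − Φ(θ)⁻¹) < 0 for all θ ∈ [Tmin,Tmax], where Φ(θ) = Ψ(θ,0). Then ζ*(τ) := (Ψ(τ,0)⁻¹)ᵀ λ satisfies ζ*(0) = λ > 0, (ζ*)'(τ)ᵀ + ζ*(τ)ᵀA(τ) = 0, and there exists ε > 0 with ζ*(0)ᵀJ − ζ*(θ)ᵀ + ε𝟙ᵀ ≤ 0 for all θ ∈ [Tmin,Tmax]. -/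
/-!
The inverse of the fundamental matrix `Φ(τ) = Ψ(τ,0)` exists for every `τ` (a solution of
`x' = A x` vanishing at one time vanishes identically) and solves the adjoint equation
`Z' = -Z A`, so `ζ*ᵀ = λᵀ Φ⁻¹` does too, with `ζ*(0) = λ`. The strict inequalities
`λᵀ (J - Φ(θ)⁻¹) < 0` involve finitely many functions continuous on the compact interval
`[Tmin, Tmax]`, hence hold with a uniform margin `ε`.
-/

open Matrix Set Filter Topology

theorem IsCompact.exists_pos_forall_add_le_zero {X ι : Type*} [TopologicalSpace X] [Finite ι]
    {K : Set X} (hK : IsCompact K) {f : X → ι → ℝ} (hf : ContinuousOn f K)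
    (hneg : ∀ x ∈ K, ∀ j, f x j < 0) : ∃ ε > 0, ∀ x ∈ K, ∀ j, f x j + ε ≤ 0 := by
  have hmargin : ∀ j, ∀ᶠ ε in 𝓝[>] (0 : ℝ), ∀ x ∈ K, f x j + ε ≤ 0 := fun j => by
    obtain ⟨e, he, hle⟩ :=
      hK.exists_forall_le' (f := fun x => -f x j) (continuousOn_pi.1 hf j).neg
      (fun x hx => neg_pos.2 (hneg x hx j))
    filter_upwards [Ioo_mem_nhdsGT he] with ε hε x hx
    linarith [hle x hx, hε.2]
  obtain ⟨ε, hε, hε_pos⟩ := ((eventually_all.2 hmargin).and self_mem_nhdsWithin).exists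
  exact ⟨ε, hε_pos, fun x hx j => hε j x hx⟩

section

variable {ι : Type*} [Fintype ι]

theorem HasDerivAt.mulVec_const {M : ℝ → Matrix ι ι ℝ} {M' : Matrix ι ι ℝ} {t : ℝ}
    (hM : HasDerivAt M M' t) (w : ι → ℝ) : HasDerivAt (fun s => M s *ᵥ w) (M' *ᵥ w) t :=
  hasDerivAt_pi.2 fun i =>
    HasDerivAt.fun_sum fun j _ => (hasDerivAt_pi.1 (hasDerivAt_pi.1 hM i) j).mul_const (w j)

theorem HasDerivAt.const_vecMul {M : ℝ → Matrix ι ι ℝ} {M' : Matrix ι ι ℝ} {t : ℝ}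
    (v : ι → ℝ) (hM : HasDerivAt M M' t) : HasDerivAt (fun s => v ᵥ* M s) (v ᵥ* M') t :=
  hasDerivAt_pi.2 fun j =>
    HasDerivAt.fun_sum fun i _ => (hasDerivAt_pi.1 (hasDerivAt_pi.1 hM i) j).const_mul (v i)

variable [DecidableEq ι]

attribute [local instance] Matrix.linftyOpNormedAddCommGroup Matrix.linftyOpNormedSpace
  Matrix.linftyOpNormedRing Matrix.linftyOpNormedAlgebra

theorem HasDerivAt.matrix_inv {M : ℝ → Matrix ι ι ℝ} {M' : Matrix ι ι ℝ} {t : ℝ}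
    (hM : HasDerivAt M M' t) (hu : IsUnit (M t)) :
    HasDerivAt (fun s => (M s)⁻¹) (-((M t)⁻¹ * M' * (M t)⁻¹)) t := by
  have hinv := (hasFDerivAt_ringInverse (𝕜 := ℝ) hu.unit).comp_hasDerivAt_of_eq t hM
    hu.unit_spec.symm
  simp only [Function.comp_def, ← nonsing_inv_eq_ringInverse, coe_units_inv, hu.unit_spec] at hinv
  exact hinv

theorem eq_zero_of_hasDerivAt_mulVec {A : ℝ → Matrix ι ι ℝ} (hA : Continuous A)
    {f : ℝ → ι → ℝ} (hf : ∀ t, HasDerivAt f (A t *ᵥ f t) t) {t₀ : ℝ} (h₀ : f t₀ = 0) :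
    f = 0 := by
  funext t
  obtain ⟨K, hK⟩ := (isCompact_Icc (a := min t t₀ - 1) (b := max t t₀ + 1)).bddAbove_image
    (continuous_nnnorm.comp hA).continuousOn
  have hLip : ∀ s ∈ Ioo (min t t₀ - 1) (max t t₀ + 1),
      LipschitzOnWith K (fun x => A s *ᵥ x) univ := fun s hs =>
    LipschitzWith.lipschitzOnWith <| LipschitzWith.of_dist_le_mul fun x y => by
      rw [dist_eq_norm, dist_eq_norm, ← mulVec_sub]
      exact (linfty_opNorm_mulVec _ _).trans <| by
        gcongr
        exact hK (mem_image_of_mem _ (Ioo_subset_Icc_self hs))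
  exact ODE_solution_unique_of_mem_Ioo hLip
    ⟨by linarith [min_le_right t t₀], by linarith [le_max_right t t₀]⟩
    (fun s _ => ⟨hf s, trivial⟩) (fun s _ => ⟨by simp, trivial⟩) h₀
    ⟨by linarith [min_le_left t t₀], by linarith [le_max_left t t₀]⟩

theorem isUnit_of_hasDerivAt_mul {A X : ℝ → Matrix ι ι ℝ} (hA : Continuous A)
    (hX : ∀ t, HasDerivAt X (A t * X t) t) {t₀ : ℝ} (h₀ : IsUnit (X t₀)) (t : ℝ) :
    IsUnit (X t) := by
  rw [isUnit_iff_isUnit_det, isUnit_iff_ne_zero]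
  intro hdet
  obtain ⟨w, hw, hXw⟩ := exists_mulVec_eq_zero_iff.2 hdet
  have hXw' : ∀ s, HasDerivAt (fun s => X s *ᵥ w) (A s *ᵥ (X s *ᵥ w)) s := fun s => by
    simpa only [mulVec_mulVec] using (hX s).mulVec_const w
  have hsol : (fun s => X s *ᵥ w) = 0 := eq_zero_of_hasDerivAt_mulVec hA hXw' hXw
  exact hw (mulVec_injective_iff_isUnit.2 h₀ (by simpa using congrFun hsol t₀))

theorem HasDerivAt.matrix_inv_of_eq_mul {A X : ℝ → Matrix ι ι ℝ} {t : ℝ}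
    (hX : HasDerivAt X (A t * X t) t) (hu : IsUnit (X t)) :
    HasDerivAt (fun s => (X s)⁻¹) (-((X t)⁻¹ * A t)) t := by
  have hdet := (isUnit_iff_isUnit_det _).1 hu
  simpa only [mul_assoc, mul_nonsing_inv _ hdet, mul_one] using hX.matrix_inv hu

end

theorem stmt9_general {n : ℕ} (Tmin Tmax : ℝ)
    (A : ℝ → Matrix (Fin n) (Fin n) ℝ)
    (hAcont : ∀ i j, Continuous fun τ => A τ i j)
    (J : Matrix (Fin n) (Fin n) ℝ)
    (Ψ : ℝ → ℝ → Matrix (Fin n) (Fin n) ℝ)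
    (hode : ∀ s τ i j, HasDerivAt (fun t => Ψ t s i j) ((A τ * Ψ τ s) i j) τ)
    (hinit : ∀ s, Ψ s s = 1)
    (lam : Fin n → ℝ)
    (ha : ∀ θ ∈ Set.Icc Tmin Tmax, ∀ j, Matrix.vecMul lam (J - (Ψ θ 0)⁻¹) j < 0) :
    (∀ j, Matrix.vecMul lam ((Ψ 0 0)⁻¹) j = lam j) ∧
    (∀ τ ∈ Set.Icc (0 : ℝ) Tmax, ∀ j,
      HasDerivAt (fun t => Matrix.vecMul lam ((Ψ t 0)⁻¹) j)
        (-(Matrix.vecMul (Matrix.vecMul lam ((Ψ τ 0)⁻¹)) (A τ)) j) τ) ∧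
    (∃ ε > 0, ∀ θ ∈ Set.Icc Tmin Tmax, ∀ j,
      Matrix.vecMul (Matrix.vecMul lam ((Ψ 0 0)⁻¹)) J j
        - Matrix.vecMul lam ((Ψ θ 0)⁻¹) j + ε ≤ 0) := by
  have hA : Continuous A := continuous_pi fun i => continuous_pi fun j => hAcont i j
  have hΦ : ∀ τ, HasDerivAt (fun t => Ψ t 0) (A τ * Ψ τ 0) τ := fun τ =>
    hasDerivAt_pi.2 fun i => hasDerivAt_pi.2 fun j => hode 0 τ i j
  have hΦunit : ∀ τ, IsUnit (Ψ τ 0) :=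
    isUnit_of_hasDerivAt_mul hA hΦ (by rw [hinit]; exact isUnit_one)
  have hζ : ∀ τ, HasDerivAt (fun t => lam ᵥ* (Ψ t 0)⁻¹) (-((lam ᵥ* (Ψ τ 0)⁻¹) ᵥ* A τ)) τ :=
    fun τ => by
      simpa only [vecMul_neg, vecMul_vecMul] using
        ((hΦ τ).matrix_inv_of_eq_mul (hΦunit τ)).const_vecMul lam
  have hζ₀ : lam ᵥ* (Ψ 0 0)⁻¹ = lam := by rw [hinit, inv_one, vecMul_one]
  refine ⟨fun j => by rw [hζ₀], fun τ _ j => hasDerivAt_pi.1 (hζ τ) j, ?_⟩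
  have hcont : ContinuousOn (fun θ => lam ᵥ* (J - (Ψ θ 0)⁻¹)) (Icc Tmin Tmax) := by
    simp only [vecMul_sub]
    exact (continuous_const.sub (continuous_iff_continuousAt.2 fun τ =>
      (hζ τ).continuousAt)).continuousOn
  obtain ⟨ε, hε, hle⟩ := isCompact_Icc.exists_pos_forall_add_le_zero hcont ha
  refine ⟨ε, hε, fun θ hθ j => ?_⟩
  simpa only [hζ₀, vecMul_sub, Pi.sub_apply] using hle θ hθ j

/-- Range dwell-time, (a)⇒(b): If A is Metzler on [0,Tmax], J ≥ 0, and
there exists λ > 0 with λᵀ(J − Φ(θ)⁻¹) < 0 componentwise for all θ ∈ [Tmin,Tmax] where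
Φ(θ) = Ψ(θ,0), then ζ*(τ) := (Ψ(τ,0)⁻¹)ᵀλ satisfies ζ*(0) = λ > 0,
(ζ*)'(τ)ᵀ + ζ*(τ)ᵀA(τ) = 0, and there exists ε > 0 with
ζ*(0)ᵀJ − ζ*(θ)ᵀ + ε𝟙ᵀ ≤ 0 for all θ ∈ [Tmin,Tmax]. -/
theorem stmt9 {n : ℕ} (Tmin Tmax : ℝ) (hT : 0 < Tmin) (hTT : Tmin ≤ Tmax)
    (A : ℝ → Matrix (Fin n) (Fin n) ℝ)
    (hAcont : ∀ i j, Continuous fun τ => A τ i j)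
    (hMetzler : ∀ τ ∈ Set.Icc (0 : ℝ) Tmax, ∀ i j, i ≠ j → 0 ≤ A τ i j)
    (J : Matrix (Fin n) (Fin n) ℝ) (hJ : ∀ i j, 0 ≤ J i j)
    (Ψ : ℝ → ℝ → Matrix (Fin n) (Fin n) ℝ)
    (hode : ∀ s τ i j, HasDerivAt (fun t => Ψ t s i j) ((A τ * Ψ τ s) i j) τ)
    (hinit : ∀ s, Ψ s s = 1)
    (lam : Fin n → ℝ) (hlam : ∀ j, 0 < lam j)
    (ha : ∀ θ ∈ Set.Icc Tmin Tmax, ∀ j, Matrix.vecMul lam (J - (Ψ θ 0)⁻¹) j < 0) :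
    (∀ j, Matrix.vecMul lam ((Ψ 0 0)⁻¹) j = lam j) ∧
    (∀ τ ∈ Set.Icc (0 : ℝ) Tmax, ∀ j,
      HasDerivAt (fun t => Matrix.vecMul lam ((Ψ t 0)⁻¹) j)
        (-(Matrix.vecMul (Matrix.vecMul lam ((Ψ τ 0)⁻¹)) (A τ)) j) τ) ∧
    (∃ ε > 0, ∀ θ ∈ Set.Icc Tmin Tmax, ∀ j,
      Matrix.vecMul (Matrix.vecMul lam ((Ψ 0 0)⁻¹)) J j
        - Matrix.vecMul lam ((Ψ θ 0)⁻¹) j + ε ≤ 0) :=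
  stmt9_general Tmin Tmax A hAcont J Ψ hode hinit lam ha
end

section
/- Suppose ζ : [0,T] → ℝⁿ is differentiable, A(τ) is Metzler, Ec(τ) and Cc, Fc are entrywise nonnegative matrices, and for all τ ∈ [0,T]: ζ'(τ)ᵀ + ζ(τ)ᵀA(τ) + 𝟙ᵀCc ≤ 0 and ζ(τ)ᵀEc(τ) + 𝟙ᵀFc − γ𝟙ᵀ ≤ 0. If x solves x'(τ) = A(τ)x(τ) + Ec(τ)w(τ) with x(τ) ≥ 0 and w(τ) ≥ 0 on [0,T], and z(τ) = Cc x(τ) + Fc w(τ), then for V(τ) := ζ(τ)ᵀx(τ) one has V(T) − V(0) + ∫₀ᵀ (𝟙ᵀz(s) − γ𝟙ᵀw(s)) ds ≤ 0. -/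
open Set Matrix

/-!
With `V τ = ζ τ ⬝ᵥ x τ`, along the trajectory
`V' + 𝟙ᵀz - γ𝟙ᵀw = (ζ'ᵀ + ζᵀA + 𝟙ᵀCc) x + (ζᵀEc + 𝟙ᵀFc - γ𝟙ᵀ) w`,
a nonpositive row vector against `x ≥ 0` plus one against `w ≥ 0`. Integrating this pointwise
dissipation inequality over `[0, T]` gives the claim.
-/

-- Only an inequality form of the fundamental theorem of calculus is used, since `f'` need not
-- be integrable.
theorem sub_add_integral_nonpos_of_hasDerivAt {f f' g : ℝ → ℝ} {a b : ℝ} (hab : a ≤ b)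
    (hf : ∀ t ∈ Icc a b, HasDerivAt f (f' t) t) (hg : ContinuousOn g (Icc a b))
    (hle : ∀ t ∈ Icc a b, f' t + g t ≤ 0) :
    f b - f a + ∫ t in a..b, g t ≤ 0 := by
  have key : f b - f a ≤ ∫ t in a..b, -g t :=
    intervalIntegral.sub_le_integral_of_hasDeriv_right_of_le hab
      (fun t ht => (hf t ht).continuousAt.continuousWithinAt)
      (fun t ht => (hf t (Ioo_subset_Icc_self ht)).hasDerivWithinAt)
      (hg.neg.integrableOn_compact isCompact_Icc)
      (fun t ht => by linarith [hle t (Ioo_subset_Icc_self ht)])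
  rw [intervalIntegral.integral_neg] at key
  linarith

theorem hasDerivAt_dotProduct_s13 {ι : Type*} [Fintype ι] {u v : ℝ → ι → ℝ} {u' v' : ι → ℝ}
    {τ : ℝ} (hu : ∀ i, HasDerivAt (fun t => u t i) (u' i) τ)
    (hv : ∀ i, HasDerivAt (fun t => v t i) (v' i) τ) :
    HasDerivAt (fun t => u t ⬝ᵥ v t) (u' ⬝ᵥ v τ + u τ ⬝ᵥ v') τ := by
  simpa only [dotProduct, ← Finset.sum_add_distrib] using
    HasDerivAt.fun_sum fun i _ => (hu i).fun_mul (hv i)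

theorem dotProduct_nonpos_of_nonpos_of_nonneg {ι : Type*} [Fintype ι] {u v : ι → ℝ}
    (hu : u ≤ 0) (hv : 0 ≤ v) : u ⬝ᵥ v ≤ 0 :=
  Finset.sum_nonpos fun i _ => mul_nonpos_of_nonpos_of_nonneg (hu i) (hv i)

theorem storage_rate_add_supply_rate_nonpos {ι κ μ : Type*} [Fintype ι] [Fintype κ] [Fintype μ]
    {ζ ζ' x : ι → ℝ} {w : κ → ℝ} {A : Matrix ι ι ℝ} {E : Matrix ι κ ℝ}
    {C : Matrix μ ι ℝ} {F : Matrix μ κ ℝ} {γ : ℝ}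
    (h₁ : ∀ j, ζ' j + (ζ ᵥ* A) j + ((1 : μ → ℝ) ᵥ* C) j ≤ 0)
    (h₂ : ∀ j, (ζ ᵥ* E) j + ((1 : μ → ℝ) ᵥ* F) j - γ ≤ 0) (hx : 0 ≤ x) (hw : 0 ≤ w) :
    ζ' ⬝ᵥ x + ζ ⬝ᵥ (A *ᵥ x + E *ᵥ w) + (∑ i, (C *ᵥ x + F *ᵥ w) i - γ * ∑ i, w i) ≤ 0 := by
  have hx' := dotProduct_nonpos_of_nonpos_of_nonneg
    (u := ζ' + ζ ᵥ* A + (1 : μ → ℝ) ᵥ* C) h₁ hx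
  have hw' := dotProduct_nonpos_of_nonpos_of_nonneg
    (u := ζ ᵥ* E + (1 : μ → ℝ) ᵥ* F - γ • 1) (fun j => by simpa using h₂ j) hw
  have hsplit : ζ' ⬝ᵥ x + ζ ⬝ᵥ (A *ᵥ x + E *ᵥ w) + (∑ i, (C *ᵥ x + F *ᵥ w) i - γ * ∑ i, w i)
      = (ζ' + ζ ᵥ* A + (1 : μ → ℝ) ᵥ* C) ⬝ᵥ x + (ζ ᵥ* E + (1 : μ → ℝ) ᵥ* F - γ • 1) ⬝ᵥ w := by
    simp only [← one_dotProduct, dotProduct_add, add_dotProduct, sub_dotProduct,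
      smul_dotProduct, dotProduct_mulVec, smul_eq_mul]
    ring
  linarith

theorem stmt13_general {n p q : ℕ} (T γ : ℝ) (hT : 0 ≤ T)
    (A : ℝ → Matrix (Fin n) (Fin n) ℝ) (Ec : ℝ → Matrix (Fin n) (Fin p) ℝ)
    (Cc : Matrix (Fin q) (Fin n) ℝ) (Fc : Matrix (Fin q) (Fin p) ℝ)
    (ζ ζ' : ℝ → Fin n → ℝ)
    (hζ : ∀ τ ∈ Set.Icc (0 : ℝ) T, ∀ j, HasDerivAt (fun t => ζ t j) (ζ' τ j) τ)
    (hineq1 : ∀ τ ∈ Set.Icc (0 : ℝ) T, ∀ j,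
      ζ' τ j + Matrix.vecMul (ζ τ) (A τ) j + Matrix.vecMul 1 Cc j ≤ 0)
    (hineq2 : ∀ τ ∈ Set.Icc (0 : ℝ) T, ∀ j,
      Matrix.vecMul (ζ τ) (Ec τ) j + Matrix.vecMul 1 Fc j - γ ≤ 0)
    (x : ℝ → Fin n → ℝ) (w : ℝ → Fin p → ℝ) (z : ℝ → Fin q → ℝ)
    (hwcont : ∀ i, Continuous fun t => w t i)
    (hxode : ∀ τ ∈ Set.Icc (0 : ℝ) T, ∀ i,
      HasDerivAt (fun s => x s i) (((A τ).mulVec (x τ) + (Ec τ).mulVec (w τ)) i) τ)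
    (hxpos : ∀ τ ∈ Set.Icc (0 : ℝ) T, ∀ i, 0 ≤ x τ i)
    (hwpos : ∀ τ ∈ Set.Icc (0 : ℝ) T, ∀ i, 0 ≤ w τ i)
    (hz : ∀ τ, z τ = Cc.mulVec (x τ) + Fc.mulVec (w τ)) :
    dotProduct (ζ T) (x T) - dotProduct (ζ 0) (x 0)
      + ∫ s in (0 : ℝ)..T, ((∑ i, z s i) - γ * ∑ i, w s i) ≤ 0 := by
  obtain rfl : z = fun τ => Cc *ᵥ x τ + Fc *ᵥ w τ := funext hz
  have hxcont : ContinuousOn x (Icc 0 T) := continuousOn_pi.mpr fun i t ht =>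
    (hxode t ht i).continuousAt.continuousWithinAt
  have hw : Continuous w := continuous_pi hwcont
  exact sub_add_integral_nonpos_of_hasDerivAt hT
    (fun τ hτ => hasDerivAt_dotProduct_s13 (hζ τ hτ) (hxode τ hτ)) (by fun_prop)
    fun τ hτ => storage_rate_add_supply_rate_nonpos (hineq1 τ hτ) (hineq2 τ hτ)
      (hxpos τ hτ) (hwpos τ hτ)

/-- Continuous-time dissipation inequality. If ζ is differentiable and the
two linear-programming inequalities hold on [0,T], and x ≥ 0 solves the positive linear
ODE with nonnegative input w and output z = Cc x + Fc w, then for V(τ) = ζ(τ)ᵀx(τ),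
V(T) − V(0) + ∫₀ᵀ (𝟙ᵀz(s) − γ𝟙ᵀw(s)) ds ≤ 0. -/
theorem stmt13 {n p q : ℕ} (T γ : ℝ) (hT : 0 ≤ T) (hγ : 0 < γ)
    (A : ℝ → Matrix (Fin n) (Fin n) ℝ) (Ec : ℝ → Matrix (Fin n) (Fin p) ℝ)
    (Cc : Matrix (Fin q) (Fin n) ℝ) (Fc : Matrix (Fin q) (Fin p) ℝ)
    (hAcont : ∀ i j, Continuous fun t => A t i j)
    (hEccont : ∀ i j, Continuous fun t => Ec t i j)
    (hMetzler : ∀ t ∈ Set.Icc (0 : ℝ) T, ∀ i j, i ≠ j → 0 ≤ A t i j)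
    (hEc : ∀ t ∈ Set.Icc (0 : ℝ) T, ∀ i j, 0 ≤ Ec t i j)
    (hCc : ∀ i j, 0 ≤ Cc i j) (hFc : ∀ i j, 0 ≤ Fc i j)
    (ζ ζ' : ℝ → Fin n → ℝ)
    (hζ : ∀ τ ∈ Set.Icc (0 : ℝ) T, ∀ j, HasDerivAt (fun t => ζ t j) (ζ' τ j) τ)
    (hineq1 : ∀ τ ∈ Set.Icc (0 : ℝ) T, ∀ j,
      ζ' τ j + Matrix.vecMul (ζ τ) (A τ) j + Matrix.vecMul 1 Cc j ≤ 0)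
    (hineq2 : ∀ τ ∈ Set.Icc (0 : ℝ) T, ∀ j,
      Matrix.vecMul (ζ τ) (Ec τ) j + Matrix.vecMul 1 Fc j - γ ≤ 0)
    (x : ℝ → Fin n → ℝ) (w : ℝ → Fin p → ℝ) (z : ℝ → Fin q → ℝ)
    (hwcont : ∀ i, Continuous fun t => w t i)
    (hxode : ∀ τ ∈ Set.Icc (0 : ℝ) T, ∀ i,
      HasDerivAt (fun s => x s i) (((A τ).mulVec (x τ) + (Ec τ).mulVec (w τ)) i) τ)
    (hxpos : ∀ τ ∈ Set.Icc (0 : ℝ) T, ∀ i, 0 ≤ x τ i)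
    (hwpos : ∀ τ ∈ Set.Icc (0 : ℝ) T, ∀ i, 0 ≤ w τ i)
    (hz : ∀ τ, z τ = Cc.mulVec (x τ) + Fc.mulVec (w τ)) :
    dotProduct (ζ T) (x T) - dotProduct (ζ 0) (x 0)
      + ∫ s in (0 : ℝ)..T, ((∑ i, z s i) - γ * ∑ i, w s i) ≤ 0 :=
  stmt13_general T γ hT A Ec Cc Fc ζ ζ' hζ hineq1 hineq2 x w z hwcont hxode hxpos hwpos hz
end
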